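/- If two types τ and σ of the language {→,+,×} are isomorphic (witnessed by a pair of closed lambda terms whose compositions are =βη-equal to the identity), then for every valuation v assigning a positive natural number to every atomic type, the arithmetic interpretations of τ and σ under v are equal, where τ+σ is interpreted as sum, τ×σ as product, and τ→σ as the exponential ⟦σ⟧^⟦τ⟧. -/

import Mathlib

namespace ExpLog

-- Types generated by atoms, arrows, products and sums.
inductive Ty : Type
  | atom : ℕ → Ty
  | arr  : Ty → Ty → Ty
  | prod : Ty → Ty → Ty
  | sum  : Ty → Ty → Ty
  deriving Repr, DecidableEq
abbrev Ctx := List Ty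

-- Typed de Bruijn indices.
inductive Var : Ctx → Ty → Type
  | vz {Γ A} : Var (A :: Γ) A
  | vs {Γ A B} : Var Γ A → Var (B :: Γ) A

-- Intrinsically typed terms of the lambda calculus with sums and products.
inductive Tm : Ctx → Ty → Type
  | var  {Γ A} : Var Γ A → Tm Γ A
  | lam  {Γ A B} : Tm (A :: Γ) B → Tm Γ (Ty.arr A B)
  | app  {Γ A B} : Tm Γ (Ty.arr A B) → Tm Γ A → Tm Γ B
  | pair {Γ A B} : Tm Γ A → Tm Γ B → Tm Γ (Ty.prod A B)
  | fst  {Γ A B} : Tm Γ (Ty.prod A B) → Tm Γ A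
  | snd  {Γ A B} : Tm Γ (Ty.prod A B) → Tm Γ B
  | inl  {Γ A B} : Tm Γ A → Tm Γ (Ty.sum A B)
  | inr  {Γ A B} : Tm Γ B → Tm Γ (Ty.sum A B)
  | case {Γ A B C} : Tm Γ (Ty.sum A B) → Tm (A :: Γ) C → Tm (B :: Γ) C → Tm Γ C

-- Renamings and substitutions.
def Ren (Γ Δ : Ctx) : Type := ∀ A, Var Γ A → Var Δ A

def Ren.lift {Γ Δ A} (ρ : Ren Γ Δ) : Ren (A :: Γ) (A :: Δ) := fun B x =>
  match x with
  | .vz => .vz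
  | .vs y => .vs (ρ B y)

def Tm.rename : ∀ {Γ Δ : Ctx} {A}, Ren Γ Δ → Tm Γ A → Tm Δ A
  | _, _, _, ρ, .var x => .var (ρ _ x)
  | _, _, _, ρ, .lam t => .lam (Tm.rename (Ren.lift ρ) t)
  | _, _, _, ρ, .app t u => .app (Tm.rename ρ t) (Tm.rename ρ u)
  | _, _, _, ρ, .pair t u => .pair (Tm.rename ρ t) (Tm.rename ρ u)
  | _, _, _, ρ, .fst t => .fst (Tm.rename ρ t)
  | _, _, _, ρ, .snd t => .snd (Tm.rename ρ t)
  | _, _, _, ρ, .inl t => .inl (Tm.rename ρ t)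
  | _, _, _, ρ, .inr t => .inr (Tm.rename ρ t)
  | _, _, _, ρ, .case s t u =>
      .case (Tm.rename ρ s) (Tm.rename (Ren.lift ρ) t) (Tm.rename (Ren.lift ρ) u)

/-- Weakening of a term by one extra hypothesis. -/
def Tm.wk {Γ A B} (t : Tm Γ A) : Tm (B :: Γ) A := Tm.rename (fun _ v => .vs v) t

def Sub (Γ Δ : Ctx) : Type := ∀ A, Var Γ A → Tm Δ A

def Sub.lift {Γ Δ A} (σ : Sub Γ Δ) : Sub (A :: Γ) (A :: Δ) := fun B x =>
  match x with
  | .vz => .var .vz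
  | .vs y => Tm.wk (σ B y)

def Tm.subst : ∀ {Γ Δ : Ctx} {A}, Sub Γ Δ → Tm Γ A → Tm Δ A
  | _, _, _, σ, .var x => σ _ x
  | _, _, _, σ, .lam t => .lam (Tm.subst (Sub.lift σ) t)
  | _, _, _, σ, .app t u => .app (Tm.subst σ t) (Tm.subst σ u)
  | _, _, _, σ, .pair t u => .pair (Tm.subst σ t) (Tm.subst σ u)
  | _, _, _, σ, .fst t => .fst (Tm.subst σ t)
  | _, _, _, σ, .snd t => .snd (Tm.subst σ t)
  | _, _, _, σ, .inl t => .inl (Tm.subst σ t)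
  | _, _, _, σ, .inr t => .inr (Tm.subst σ t)
  | _, _, _, σ, .case s t u =>
      .case (Tm.subst σ s) (Tm.subst (Sub.lift σ) t) (Tm.subst (Sub.lift σ) u)

/-- Substitution of a single term for de Bruijn index 0. -/
def Sub.single {Γ A} (u : Tm Γ A) : Sub (A :: Γ) Γ := fun B x =>
  match x with
  | .vz => u
  | .vs y => .var y

/-- `t.subst1 u` is `t{u/x}` where `x` is de Bruijn index 0. -/
def Tm.subst1 {Γ A B} (t : Tm (A :: Γ) B) (u : Tm Γ A) : Tm Γ B := Tm.subst (Sub.single u) t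

/-- The substitution `{ι₁ x₁ / x}` (for the top variable of sum type). -/
def Sub.inlTop {Γ A B} : Sub (Ty.sum A B :: Γ) (A :: Γ) := fun C x =>
  match x with
  | .vz => .inl (.var .vz)
  | .vs y => .var (.vs y)

/-- The substitution `{ι₂ x₂ / x}` (for the top variable of sum type). -/
def Sub.inrTop {Γ A B} : Sub (Ty.sum A B :: Γ) (B :: Γ) := fun C x =>
  match x with
  | .vz => .inr (.var .vz)
  | .vs y => .var (.vs y)

/-- Exchange of the two topmost hypotheses. -/
def Ren.swap {Γ A B} : Ren (A :: B :: Γ) (B :: A :: Γ) := fun C x =>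
  match x with
  | .vz => .vs .vz
  | .vs .vz => .vz
  | .vs (.vs y) => .vs (.vs y)

-- The standard equational theory =βη of the lambda calculus with sums.
inductive Jeq : ∀ {Γ : Ctx} {A : Ty}, Tm Γ A → Tm Γ A → Prop
  | refl {Γ A} (t : Tm Γ A) : Jeq t t
  | symm {Γ A} {t u : Tm Γ A} : Jeq t u → Jeq u t
  | trans {Γ A} {t u v : Tm Γ A} : Jeq t u → Jeq u v → Jeq t v
  | lam_congr {Γ A B} {t t' : Tm (A :: Γ) B} : Jeq t t' → Jeq (Tm.lam t) (Tm.lam t')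
  | app_congr {Γ A B} {t t' : Tm Γ (Ty.arr A B)} {u u' : Tm Γ A} :
      Jeq t t' → Jeq u u' → Jeq (Tm.app t u) (Tm.app t' u')
  | pair_congr {Γ A B} {t t' : Tm Γ A} {u u' : Tm Γ B} :
      Jeq t t' → Jeq u u' → Jeq (Tm.pair t u) (Tm.pair t' u')
  | fst_congr {Γ A B} {t t' : Tm Γ (Ty.prod A B)} : Jeq t t' → Jeq (Tm.fst t) (Tm.fst t')
  | snd_congr {Γ A B} {t t' : Tm Γ (Ty.prod A B)} : Jeq t t' → Jeq (Tm.snd t) (Tm.snd t')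
  | inl_congr {Γ A B} {t t' : Tm Γ A} : Jeq t t' → Jeq (Tm.inl (B := B) t) (Tm.inl t')
  | inr_congr {Γ A B} {t t' : Tm Γ B} : Jeq t t' → Jeq (Tm.inr (A := A) t) (Tm.inr t')
  | case_congr {Γ A B C} {s s' : Tm Γ (Ty.sum A B)} {t t' : Tm (A :: Γ) C} {u u' : Tm (B :: Γ) C} :
      Jeq s s' → Jeq t t' → Jeq u u' → Jeq (Tm.case s t u) (Tm.case s' t' u')
  | beta_arr {Γ A B} (t : Tm (A :: Γ) B) (u : Tm Γ A) :
      Jeq (Tm.app (Tm.lam t) u) (Tm.subst1 t u)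
  | beta_fst {Γ A B} (t : Tm Γ A) (u : Tm Γ B) : Jeq (Tm.fst (Tm.pair t u)) t
  | beta_snd {Γ A B} (t : Tm Γ A) (u : Tm Γ B) : Jeq (Tm.snd (Tm.pair t u)) u
  | beta_inl {Γ A B C} (m : Tm Γ A) (n₁ : Tm (A :: Γ) C) (n₂ : Tm (B :: Γ) C) :
      Jeq (Tm.case (Tm.inl m) n₁ n₂) (Tm.subst1 n₁ m)
  | beta_inr {Γ A B C} (m : Tm Γ B) (n₁ : Tm (A :: Γ) C) (n₂ : Tm (B :: Γ) C) :
      Jeq (Tm.case (Tm.inr m) n₁ n₂) (Tm.subst1 n₂ m)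
  | eta_arr {Γ A B} (t : Tm Γ (Ty.arr A B)) :
      Jeq t (Tm.lam (Tm.app (Tm.wk t) (Tm.var .vz)))
  | eta_prod {Γ A B} (t : Tm Γ (Ty.prod A B)) : Jeq t (Tm.pair (Tm.fst t) (Tm.snd t))
  | eta_sum {Γ A B C} (n : Tm (Ty.sum A B :: Γ) C) (m : Tm Γ (Ty.sum A B)) :
      Jeq (Tm.subst1 n m)
          (Tm.case m (Tm.subst Sub.inlTop n) (Tm.subst Sub.inrTop n))

/-- Type isomorphism: a pair of closed coercions whose compositions are βη-equal
to the identity. -/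
def Iso (τ σ : Ty) : Prop :=
  ∃ (M : Tm [] (Ty.arr σ τ)) (N : Tm [] (Ty.arr τ σ)),
    Jeq (Tm.lam (Tm.app (Tm.wk M) (Tm.app (Tm.wk N) (Tm.var .vz))))
        (Tm.lam (Tm.var .vz)) ∧
    Jeq (Tm.lam (Tm.app (Tm.wk N) (Tm.app (Tm.wk M) (Tm.var .vz))))
        (Tm.lam (Tm.var .vz))

-- The arithmetic interpretation of types under a valuation of the atoms.
def interpTy (v : ℕ → ℕ) : Ty → ℕ
  | .atom p => v p
  | .arr a b => interpTy v b ^ interpTy v a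
  | .prod a b => interpTy v a * interpTy v b
  | .sum a b => interpTy v a + interpTy v b

/-! Isomorphic types denote equinumerous finite sets: interpret each type as a finite set
(atoms as `Fin (v p)`, arrows as function spaces, products and sums as such). The equations of
=βη are sound for this interpretation, so the two coercions of an isomorphism denote mutually
inverse functions, and the interpretation of a type has exactly `interpTy v` elements. -/

section

variable (v : ℕ → ℕ)

def sem : Ty → Type
  | .atom p => Fin (v p)
  | .arr a b => sem a → sem b
  | .prod a b => sem a × sem b
  | .sum a b => sem a ⊕ sem b

def semEquivFin : ∀ A : Ty, sem v A ≃ Fin (interpTy v A)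
  | .atom _ => Equiv.refl _
  | .arr a b => (Equiv.arrowCongr (semEquivFin a) (semEquivFin b)).trans finFunctionFinEquiv
  | .prod a b => (Equiv.prodCongr (semEquivFin a) (semEquivFin b)).trans finProdFinEquiv
  | .sum a b => (Equiv.sumCongr (semEquivFin a) (semEquivFin b)).trans finSumFinEquiv

def Env (Γ : Ctx) : Type := ∀ A, Var Γ A → sem v A

variable {v}

def Env.nil : Env v [] := fun _ x => nomatch x

def Env.cons {Γ A} (x : sem v A) (η : Env v Γ) : Env v (A :: Γ) := fun _ y =>
  match y with
  | .vz => x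
  | .vs y => η _ y

def eval : ∀ {Γ A}, Tm Γ A → Env v Γ → sem v A
  | _, _, .var x, η => η _ x
  | _, _, .lam t, η => fun x => eval t (Env.cons x η)
  | _, _, .app t u, η => eval t η (eval u η)
  | _, _, .pair t u, η => (eval t η, eval u η)
  | _, _, .fst t, η => (eval t η).1
  | _, _, .snd t, η => (eval t η).2
  | _, _, .inl t, η => .inl (eval t η)
  | _, _, .inr t, η => .inr (eval t η)
  | _, _, .case s t u, η =>
      Sum.elim (fun a => eval t (Env.cons a η)) (fun b => eval u (Env.cons b η)) (eval s η)

@[simp]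
theorem Env.cons_vz {Γ A} (x : sem v A) (η : Env v Γ) : Env.cons x η A .vz = x := rfl

@[simp]
theorem Env.cons_vs {Γ A B} (x : sem v A) (η : Env v Γ) (y : Var Γ B) :
    Env.cons x η B (.vs y) = η B y := rfl

theorem Env.cons_comp_lift {Γ Δ A} (ρ : Ren Γ Δ) (x : sem v A) (η : Env v Δ) :
    (fun B y => Env.cons x η B (ρ.lift B y)) = Env.cons x (fun B y => η B (ρ B y)) := by
  funext B y; cases y <;> rfl

theorem eval_rename {Γ A} (t : Tm Γ A) :
    ∀ {Δ} (ρ : Ren Γ Δ) (η : Env v Δ), eval (t.rename ρ) η = eval t (fun B x => η B (ρ B x)) := by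
  induction t <;> intro Δ ρ η <;>
    simp only [Tm.rename, eval, Env.cons_comp_lift, *] <;> rfl

theorem eval_wk {Γ A B} (t : Tm Γ A) (x : sem v B) (η : Env v Γ) :
    eval (t.wk) (Env.cons x η) = eval t η :=
  eval_rename t _ _

theorem Env.cons_comp_lift_subst {Γ Δ A} (σ : Sub Γ Δ) (x : sem v A) (η : Env v Δ) :
    (fun B y => eval (σ.lift B y) (Env.cons x η)) = Env.cons x (fun B y => eval (σ B y) η) := by
  funext B y; cases y
  · rfl
  · exact eval_wk _ x η

theorem eval_subst {Γ A} (t : Tm Γ A) :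
    ∀ {Δ} (σ : Sub Γ Δ) (η : Env v Δ), eval (t.subst σ) η = eval t (fun B x => eval (σ B x) η) := by
  induction t <;> intro Δ σ η <;>
    simp only [Tm.subst, eval, Env.cons_comp_lift_subst, *] <;> rfl

theorem eval_subst1 {Γ A B} (t : Tm (A :: Γ) B) (u : Tm Γ A) (η : Env v Γ) :
    eval (t.subst1 u) η = eval t (Env.cons (eval u η) η) := by
  rw [Tm.subst1, eval_subst]
  congr 1; funext B y; cases y <;> rfl

theorem Jeq.eval_eq {Γ A} {t u : Tm Γ A} (h : Jeq t u) (η : Env v Γ) : eval t η = eval u η := by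
  induction h with
  | lam_congr _ ih => exact funext fun x => ih _
  | case_congr _ _ _ ih₁ ih₂ ih₃ =>
      simp only [eval, ih₁]
      congr 1
      · exact funext fun _ => ih₂ _
      · exact funext fun _ => ih₃ _
  | eta_sum n m =>
      simp only [eval, eval_subst1, eval_subst]
      cases eval m η <;> (congr 1; funext B y; cases y <;> rfl)
  | _ => simp_all [eval, eval_subst1, eval_wk] <;> rfl

theorem Jeq.leftInverse_eval_of_comp_eq_id {Γ A B} {M : Tm Γ (.arr B A)} {N : Tm Γ (.arr A B)}
    (h : Jeq (.lam (.app M.wk (.app N.wk (.var .vz)))) (.lam (.var .vz))) (η : Env v Γ) :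
    Function.LeftInverse (eval M η) (eval N η) := fun x => by
  simpa [eval, eval_wk] using congrFun (h.eval_eq η) x

end

theorem Iso.nonempty_semEquiv {τ σ : Ty} (h : Iso τ σ) (v : ℕ → ℕ) :
    Nonempty (sem v τ ≃ sem v σ) := by
  obtain ⟨M, N, hMN, hNM⟩ := h
  exact ⟨⟨eval N Env.nil, eval M Env.nil,
    hMN.leftInverse_eval_of_comp_eq_id _, hNM.leftInverse_eval_of_comp_eq_id _⟩⟩

theorem iso_implies_arith_eq_general (τ σ : Ty) (h : Iso τ σ)
    (v : ℕ → ℕ) :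
    interpTy v τ = interpTy v σ := by
  obtain ⟨e⟩ := h.nonempty_semEquiv v
  exact Fin.equiv_iff_eq.mp ⟨(semEquivFin v τ).symm.trans (e.trans (semEquivFin v σ))⟩

/-- Isomorphic types are arithmetically equal: if τ ≅ σ then for
every valuation of the atomic types by positive natural numbers, the arithmetic
interpretations of τ and σ coincide. -/
theorem iso_implies_arith_eq (τ σ : Ty) (h : Iso τ σ)
    (v : ℕ → ℕ) (hv : ∀ p : ℕ, 0 < v p) :
    interpTy v τ = interpTy v σ :=
  iso_implies_arith_eq_general τ σ h v

end ExpLog
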